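/- Let n ≥ 3, a < (n-2)/2, and assume either (a < 0 and a < b < a+1) or (0 ≤ a ≤ b < a+1); let p = 2n/(n-2+2(b-a)), ν > 0, α, β > 1 with α + β = p. Suppose S > 0 is a constant such that for every C¹ function w : ℝⁿ → ℝ with ∫_{ℝⁿ}|x|^{-2a}|∇w|² dx < ∞ and ∫_{ℝⁿ}|x|^{-bp}|w|^p dx < ∞ one has (∫_{ℝⁿ}|x|^{-bp}|w|^p dx)^{2/p} ≤ S ∫_{ℝⁿ}|x|^{-2a}|∇w|² dx. Let m be the infimum of f(x,y) = (x² + y²)/(x^p + y^p + pν x^α y^β)^{2/p} over all x ≥ 0, y ≥ 0 with x + y = 1. Then for every pair of C¹ functions u, v : ℝⁿ → ℝ with finite weighted energies ∫|x|^{-2a}|∇u|², ∫|x|^{-2a}|∇v|² < ∞ and ∫|x|^{-bp}|u|^p, ∫|x|^{-bp}|v|^p < ∞, the vector-valued Caffarelli–Kohn–Nirenberg inequality holds: (m/S)·(∫_{ℝⁿ}|x|^{-bp}(|u|^p + |v|^p + pν|u|^α|v|^β) dx)^{2/p} ≤ ∫_{ℝⁿ}|x|^{-2a}(|∇u|² +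 |∇v|²) dx. -/

import Mathlib

/-!
With `F(x, y) = x ^ p + y ^ p + p ν x ^ α y ^ β`, the infimum `m` of `f` on the segment
`x + y = 1` controls `f` on the whole quadrant, because `F` is `p`-homogeneous (`α + β = p`):
`m F(x, y) ^ (2 / p) ≤ x ^ 2 + y ^ 2` for all `x, y ≥ 0`. Hölder's inequality with exponents
`p / α`, `p / β` gives `∫ |x| ^ (-b p) F(|u|, |v|) ≤ F(‖u‖, ‖v‖)`, where `‖·‖` are the weighted
`L^p` norms. Evaluating the scalar bound at `(‖u‖, ‖v‖)` and applying the scalar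
Caffarelli–Kohn–Nirenberg inequality to `u` and to `v` separately gives the claim.
-/

open MeasureTheory Real Filter Topology

noncomputable section

/-- Coordinate Laplacian on Euclidean space. -/
def lapl {n : ℕ} (w : EuclideanSpace ℝ (Fin n) → ℝ) (x : EuclideanSpace ℝ (Fin n)) : ℝ :=
  ∑ i : Fin n, fderiv ℝ (fun y => fderiv ℝ w y (EuclideanSpace.single i 1)) x
    (EuclideanSpace.single i 1)

/-- The weighted divergence `div(|x|^(-2a) ∇w)(x) = |x|^(-2a) (Δw(x) - 2a⟨x,∇w(x)⟩/|x|²)`. -/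
def wdiv {n : ℕ} (a : ℝ) (w : EuclideanSpace ℝ (Fin n) → ℝ) (x : EuclideanSpace ℝ (Fin n)) : ℝ :=
  ‖x‖ ^ (-(2*a)) * (lapl w x - 2*a * (@inner ℝ _ _ x (gradient w x)) / ‖x‖^2)

/-- Finiteness of the weighted Dirichlet energy `∫ |x|^(-2a) |∇w|² < ∞`. -/
def finiteEnergy {n : ℕ} (a : ℝ) (w : EuclideanSpace ℝ (Fin n) → ℝ) : Prop :=
  Integrable (fun x : EuclideanSpace ℝ (Fin n) => ‖x‖ ^ (-(2*a)) * ‖gradient w x‖^2)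

def couplingForm (p ν α β x y : ℝ) : ℝ := x ^ p + y ^ p + p * ν * x ^ α * y ^ β

section couplingForm

variable {p ν α β : ℝ}

lemma couplingForm_nonneg (hp : 0 ≤ p) (hν : 0 ≤ ν) {x y : ℝ} (hx : 0 ≤ x) (hy : 0 ≤ y) :
    0 ≤ couplingForm p ν α β x y := by
  unfold couplingForm
  positivity

lemma couplingForm_pos (hp : 0 < p) (hν : 0 ≤ ν) {x y : ℝ} (hx : 0 ≤ x) (hy : 0 ≤ y)
    (hxy : 0 < x + y) : 0 < couplingForm p ν α β x y := by
  have hcross : 0 ≤ p * ν * x ^ α * y ^ β := by positivity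
  have hsum : 0 < x ^ p + y ^ p := by
    rcases hx.eq_or_lt with rfl | hx'
    · exact add_pos_of_nonneg_of_pos (rpow_nonneg le_rfl p) (rpow_pos_of_pos (by linarith) p)
    · exact add_pos_of_pos_of_nonneg (rpow_pos_of_pos hx' p) (rpow_nonneg hy p)
  unfold couplingForm
  linarith

lemma couplingForm_zero_zero (hp : p ≠ 0) (hα : α ≠ 0) : couplingForm p ν α β 0 0 = 0 := by
  simp [couplingForm, zero_rpow hp, zero_rpow hα]

lemma couplingForm_mul_mul (hαβ : α + β = p) {t x y : ℝ} (ht : 0 < t) (hx : 0 ≤ x) (hy : 0 ≤ y) :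
    couplingForm p ν α β (t * x) (t * y) = t ^ p * couplingForm p ν α β x y := by
  have htp : t ^ α * t ^ β = t ^ p := by rw [← rpow_add ht, hαβ]
  simp only [couplingForm, mul_rpow ht.le hx, mul_rpow ht.le hy]
  linear_combination p * ν * x ^ α * y ^ β * htp

lemma couplingForm_mul_mul_rpow (hp : 0 < p) (hν : 0 ≤ ν) (hαβ : α + β = p) {t x y : ℝ}
    (ht : 0 < t) (hx : 0 ≤ x) (hy : 0 ≤ y) :
    couplingForm p ν α β (t * x) (t * y) ^ (2 / p) =
      t ^ 2 * couplingForm p ν α β x y ^ (2 / p) := by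
  rw [couplingForm_mul_mul hαβ ht hx hy, mul_rpow (rpow_nonneg ht.le p)
    (couplingForm_nonneg hp.le hν hx hy), ← rpow_mul ht.le, mul_div_cancel₀ _ hp.ne']
  norm_cast

lemma le_of_homogeneous_of_le_of_add_eq_one {g h : ℝ → ℝ → ℝ} (k : ℕ)
    (hg : ∀ t x y, 0 < t → 0 ≤ x → 0 ≤ y → g (t * x) (t * y) = t ^ k * g x y)
    (hh : ∀ t x y, 0 < t → 0 ≤ x → 0 ≤ y → h (t * x) (t * y) = t ^ k * h x y)
    (h₀ : g 0 0 ≤ h 0 0) (hle : ∀ x y, 0 ≤ x → 0 ≤ y → x + y = 1 → g x y ≤ h x y)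
    {x y : ℝ} (hx : 0 ≤ x) (hy : 0 ≤ y) : g x y ≤ h x y := by
  rcases (add_nonneg hx hy).eq_or_lt with hxy | hxy
  · obtain ⟨rfl, rfl⟩ : x = 0 ∧ y = 0 := ⟨by linarith, by linarith⟩
    exact h₀
  set t := x + y
  have hdiv : ∀ z, t * (z / t) = z := fun z => mul_div_cancel₀ z hxy.ne'
  calc g x y = g (t * (x / t)) (t * (y / t)) := by rw [hdiv, hdiv]
    _ = t ^ k * g (x / t) (y / t) := hg _ _ _ hxy (by positivity) (by positivity)
    _ ≤ t ^ k * h (x / t) (y / t) := by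
        gcongr
        exact hle _ _ (by positivity) (by positivity) (by rw [← add_div, div_self hxy.ne'])
    _ = h (t * (x / t)) (t * (y / t)) := (hh _ _ _ hxy (by positivity) (by positivity)).symm
    _ = h x y := by rw [hdiv, hdiv]

def couplingRatios (p ν α β : ℝ) : Set ℝ :=
  {z | ∃ x y : ℝ, 0 ≤ x ∧ 0 ≤ y ∧ x + y = 1 ∧
    z = (x ^ 2 + y ^ 2) / couplingForm p ν α β x y ^ (2 / p)}

lemma couplingRatios_nonneg (hp : 0 ≤ p) (hν : 0 ≤ ν) : ∀ z ∈ couplingRatios p ν α β, 0 ≤ z := by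
  rintro z ⟨x, y, hx, hy, -, rfl⟩
  have := rpow_nonneg (couplingForm_nonneg (α := α) (β := β) hp hν hx hy) (2 / p)
  positivity

lemma sInf_couplingRatios_nonneg (hp : 0 ≤ p) (hν : 0 ≤ ν) : 0 ≤ sInf (couplingRatios p ν α β) :=
  Real.sInf_nonneg (couplingRatios_nonneg hp hν)

lemma sInf_couplingRatios_mul_le (hp : 0 < p) (hν : 0 ≤ ν) (hα : 0 < α) (hαβ : α + β = p)
    {x y : ℝ} (hx : 0 ≤ x) (hy : 0 ≤ y) :
    sInf (couplingRatios p ν α β) * couplingForm p ν α β x y ^ (2 / p) ≤ x ^ 2 + y ^ 2 := by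
  set m := sInf (couplingRatios p ν α β)
  refine le_of_homogeneous_of_le_of_add_eq_one
    (g := fun x y => m * couplingForm p ν α β x y ^ (2 / p))
    (h := fun x y => x ^ 2 + y ^ 2) 2 (fun t x y ht hx hy => ?_) (fun t x y _ _ _ => by ring) ?_
    (fun x y hx hy hxy => ?_) hx hy
  · simp only [couplingForm_mul_mul_rpow hp hν hαβ ht hx hy]
    ring
  · simp [couplingForm_zero_zero hp.ne' hα.ne', zero_rpow (div_pos two_pos hp).ne']
  · have hpos := rpow_pos_of_pos
      (couplingForm_pos (α := α) (β := β) hp hν hx hy (by linarith)) (2 / p)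
    have hmle : m ≤ (x ^ 2 + y ^ 2) / couplingForm p ν α β x y ^ (2 / p) :=
      csInf_le ⟨0, couplingRatios_nonneg hp.le hν⟩ ⟨x, y, hx, hy, hxy, rfl⟩
    exact (le_div_iff₀ hpos).mp hmle

end couplingForm

section Holder

variable {Ω : Type*} [MeasurableSpace Ω] {μ : Measure Ω}

lemma MeasureTheory.Integrable.memLp_rpow_of_nonneg {F : Ω → ℝ} (hF0 : 0 ≤ F)
    (hF : Integrable F μ) {s : ℝ} (hs : 0 < s) :
    MemLp (fun x => F x ^ s) (ENNReal.ofReal (1 / s)) μ := by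
  have h := (memLp_one_iff_integrable.mpr hF).norm_rpow_div (ENNReal.ofReal s)
  rw [ENNReal.toReal_ofReal hs.le, ← ENNReal.ofReal_one, ← ENNReal.ofReal_div_of_pos hs] at h
  simpa only [Real.norm_of_nonneg (hF0 _)] using h

lemma integrable_rpow_mul_rpow {F G : Ω → ℝ} {s t : ℝ} (hs : 0 ≤ s) (ht : 0 ≤ t) (hst : s + t = 1)
    (hF0 : 0 ≤ F) (hG0 : 0 ≤ G) (hF : Integrable F μ) (hG : Integrable G μ) :
    Integrable (fun x => F x ^ s * G x ^ t) μ := by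
  refine ((hF.const_mul s).add (hG.const_mul t)).mono'
    ((hF.1.aemeasurable.pow_const s).mul (hG.1.aemeasurable.pow_const t)).aestronglyMeasurable
    (ae_of_all _ fun x => ?_)
  rw [Real.norm_of_nonneg (mul_nonneg (rpow_nonneg (hF0 x) s) (rpow_nonneg (hG0 x) t))]
  exact geom_mean_le_arith_mean2_weighted hs ht (hF0 x) (hG0 x) hst

lemma integral_rpow_mul_rpow_le {F G : Ω → ℝ} {s t : ℝ} (hs : 0 < s) (ht : 0 < t) (hst : s + t = 1)
    (hF0 : 0 ≤ F) (hG0 : 0 ≤ G) (hF : Integrable F μ) (hG : Integrable G μ) :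
    ∫ x, F x ^ s * G x ^ t ∂μ ≤ (∫ x, F x ∂μ) ^ s * (∫ x, G x ∂μ) ^ t := by
  have hconj : (1 / s).HolderConjugate (1 / t) :=
    Real.holderConjugate_iff.mpr ⟨by rw [lt_div_iff₀ hs]; linarith, by simpa using hst⟩
  have h := integral_mul_le_Lp_mul_Lq_of_nonneg hconj
    (ae_of_all _ fun x => rpow_nonneg (hF0 x) s) (ae_of_all _ fun x => rpow_nonneg (hG0 x) t)
    (hF.memLp_rpow_of_nonneg hF0 hs) (hG.memLp_rpow_of_nonneg hG0 ht)
  simpa only [← rpow_mul (hF0 _), ← rpow_mul (hG0 _), one_div_one_div, mul_one_div_cancel hs.ne',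
    mul_one_div_cancel ht.ne', rpow_one] using h

lemma integral_mul_couplingForm_le {p ν α β : ℝ} (hν : 0 ≤ ν) (hα : 0 < α) (hβ : 0 < β)
    (hαβ : α + β = p) {w f g : Ω → ℝ} (hw : 0 ≤ w) (hf : 0 ≤ f) (hg : 0 ≤ g)
    (hIf : Integrable (fun x => w x * f x ^ p) μ) (hIg : Integrable (fun x => w x * g x ^ p) μ) :
    ∫ x, w x * couplingForm p ν α β (f x) (g x) ∂μ ≤
      couplingForm p ν α β ((∫ x, w x * f x ^ p ∂μ) ^ (1 / p))
        ((∫ x, w x * g x ^ p ∂μ) ^ (1 / p)) := by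
  have hp : 0 < p := by linarith
  have hs : α / p + β / p = 1 := by rw [← add_div, hαβ, div_self hp.ne']
  have hF0 : 0 ≤ fun x => w x * f x ^ p := fun x => mul_nonneg (hw x) (rpow_nonneg (hf x) p)
  have hG0 : 0 ≤ fun x => w x * g x ^ p := fun x => mul_nonneg (hw x) (rpow_nonneg (hg x) p)
  have hpow : ∀ {a : ℝ}, 0 ≤ a → ∀ r, (a ^ p) ^ (r / p) = a ^ r := fun ha r => by
    rw [← rpow_mul ha, mul_div_cancel₀ _ hp.ne']
  have hsplit : ∀ x, w x * couplingForm p ν α β (f x) (g x) = w x * f x ^ p + w x * g x ^ p +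
      p * ν * ((w x * f x ^ p) ^ (α / p) * (w x * g x ^ p) ^ (β / p)) := fun x => by
    have hw1 : w x ^ (α / p) * w x ^ (β / p) = w x := by
      rw [← rpow_add' (hw x) (by rw [hs]; exact one_ne_zero), hs, rpow_one]
    rw [mul_rpow (hw x) (rpow_nonneg (hf x) p), mul_rpow (hw x) (rpow_nonneg (hg x) p),
      hpow (hf x), hpow (hg x), couplingForm]
    linear_combination -(p * ν * f x ^ α * g x ^ β) * hw1
  have hroot : ∀ {a : ℝ}, 0 ≤ a → ∀ r, (a ^ (1 / p)) ^ r = a ^ (r / p) := fun ha r => by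
    rw [← rpow_mul ha, one_div_mul_eq_div]
  have hX := integral_nonneg (μ := μ) hF0
  have hY := integral_nonneg (μ := μ) hG0
  have hHolder := integral_rpow_mul_rpow_le (div_pos hα hp) (div_pos hβ hp) hs hF0 hG0 hIf hIg
  have hIfg : Integrable (fun x => w x * f x ^ p + w x * g x ^ p) μ := hIf.add hIg
  have hIcross := integrable_rpow_mul_rpow (div_pos hα hp).le (div_pos hβ hp).le hs hF0 hG0 hIf hIg
  rw [integral_congr_ae (ae_of_all _ hsplit), integral_add hIfg (hIcross.const_mul _),
    integral_add hIf hIg, integral_const_mul, couplingForm, hroot hX, hroot hY, hroot hX, hroot hY,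
    div_self hp.ne', rpow_one, rpow_one, mul_assoc (p * ν)]
  gcongr

end Holder

theorem stmt_general {n : ℕ} (a b p ν α β : ℝ)
    (hν : 0 < ν) (hα : 1 < α) (hβ : 1 < β)
    (hαβ : α + β = p)
    (S : ℝ) (hS : 0 < S)
    (hCKN : ∀ w : EuclideanSpace ℝ (Fin n) → ℝ, ContDiff ℝ 1 w →
      Integrable (fun x : EuclideanSpace ℝ (Fin n) => ‖x‖ ^ (-(2*a)) * ‖gradient w x‖^2) →
      Integrable (fun x : EuclideanSpace ℝ (Fin n) => ‖x‖ ^ (-(b*p)) * |w x| ^ p) →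
      (∫ x : EuclideanSpace ℝ (Fin n), ‖x‖ ^ (-(b*p)) * |w x| ^ p) ^ (2/p) ≤
        S * ∫ x : EuclideanSpace ℝ (Fin n), ‖x‖ ^ (-(2*a)) * ‖gradient w x‖^2)
    (m : ℝ)
    (hm : m = sInf {z : ℝ | ∃ x y : ℝ, 0 ≤ x ∧ 0 ≤ y ∧ x + y = 1 ∧
      z = (x^2 + y^2) / ((x ^ p + y ^ p + p*ν * x ^ α * y ^ β) ^ (2/p))}) :
    ∀ u v : EuclideanSpace ℝ (Fin n) → ℝ, ContDiff ℝ 1 u → ContDiff ℝ 1 v →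
      Integrable (fun x : EuclideanSpace ℝ (Fin n) => ‖x‖ ^ (-(2*a)) * ‖gradient u x‖^2) →
      Integrable (fun x : EuclideanSpace ℝ (Fin n) => ‖x‖ ^ (-(2*a)) * ‖gradient v x‖^2) →
      Integrable (fun x : EuclideanSpace ℝ (Fin n) => ‖x‖ ^ (-(b*p)) * |u x| ^ p) →
      Integrable (fun x : EuclideanSpace ℝ (Fin n) => ‖x‖ ^ (-(b*p)) * |v x| ^ p) →
      (m/S) * ((∫ x : EuclideanSpace ℝ (Fin n),
          ‖x‖ ^ (-(b*p)) * (|u x| ^ p + |v x| ^ p + p*ν * |u x| ^ α * |v x| ^ β)) ^ (2/p)) ≤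
        ∫ x : EuclideanSpace ℝ (Fin n), ‖x‖ ^ (-(2*a)) * (‖gradient u x‖^2 + ‖gradient v x‖^2) := by
  intro u v hu hv hEu hEv hIu hIv
  have hp : 0 < p := by linarith
  have hm' : m = sInf (couplingRatios p ν α β) := hm
  have hm0 : 0 ≤ m := hm' ▸ sInf_couplingRatios_nonneg hp.le hν.le
  set X := ∫ x : EuclideanSpace ℝ (Fin n), ‖x‖ ^ (-(b*p)) * |u x| ^ p
  set Y := ∫ x : EuclideanSpace ℝ (Fin n), ‖x‖ ^ (-(b*p)) * |v x| ^ p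
  have hX : 0 ≤ X := integral_nonneg fun x => by positivity
  have hY : 0 ≤ Y := integral_nonneg fun x => by positivity
  have hT := integral_mul_couplingForm_le hν.le (by linarith) (by linarith) hαβ
    (fun x => rpow_nonneg (norm_nonneg x) _) (fun x => abs_nonneg (u x)) (fun x => abs_nonneg (v x))
    hIu hIv
  have hroot : ∀ {Z : ℝ}, 0 ≤ Z → (Z ^ (1 / p)) ^ 2 = Z ^ (2 / p) := fun hZ => by
    rw [← rpow_natCast, ← rpow_mul hZ, one_div_mul_eq_div, Nat.cast_ofNat]
  calc (m / S) *
        (∫ x, ‖x‖ ^ (-(b*p)) * (|u x| ^ p + |v x| ^ p + p*ν * |u x| ^ α * |v x| ^ β)) ^ (2/p)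
      ≤ (m / S) * couplingForm p ν α β (X ^ (1 / p)) (Y ^ (1 / p)) ^ (2 / p) := by
        have hT0 : 0 ≤ ∫ x : EuclideanSpace ℝ (Fin n),
            ‖x‖ ^ (-(b*p)) * couplingForm p ν α β |u x| |v x| :=
          integral_nonneg fun x => mul_nonneg (by positivity)
            (couplingForm_nonneg hp.le hν.le (abs_nonneg _) (abs_nonneg _))
        gcongr
        exact hT
    _ ≤ ((X ^ (1 / p)) ^ 2 + (Y ^ (1 / p)) ^ 2) / S := by
        rw [div_mul_eq_mul_div]
        gcongr
        exact hm' ▸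
          sInf_couplingRatios_mul_le hp hν.le (by linarith) hαβ (by positivity) (by positivity)
    _ = (X ^ (2 / p) + Y ^ (2 / p)) / S := by rw [hroot hX, hroot hY]
    _ ≤ (∫ x, ‖x‖ ^ (-(2*a)) * ‖gradient u x‖^2) + ∫ x, ‖x‖ ^ (-(2*a)) * ‖gradient v x‖^2 := by
        rw [div_le_iff₀ hS]
        linarith [hCKN u hu hEu hIu, hCKN v hv hEv hIv]
    _ = ∫ x, ‖x‖ ^ (-(2*a)) * (‖gradient u x‖^2 + ‖gradient v x‖^2) := by
        simp only [mul_add]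
        exact (integral_add hEu hEv).symm

theorem stmt {n : ℕ} (hn : 3 ≤ n) (a b p ν α β : ℝ)
    (ha : a < ((n:ℝ)-2)/2)
    (hcase : (a < 0 ∧ a < b ∧ b < a + 1) ∨ (0 ≤ a ∧ a ≤ b ∧ b < a + 1))
    (hp : p = 2*(n:ℝ)/((n:ℝ)-2+2*(b-a))) (hν : 0 < ν) (hα : 1 < α) (hβ : 1 < β)
    (hαβ : α + β = p)
    (S : ℝ) (hS : 0 < S)
    (hCKN : ∀ w : EuclideanSpace ℝ (Fin n) → ℝ, ContDiff ℝ 1 w →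
      Integrable (fun x : EuclideanSpace ℝ (Fin n) => ‖x‖ ^ (-(2*a)) * ‖gradient w x‖^2) →
      Integrable (fun x : EuclideanSpace ℝ (Fin n) => ‖x‖ ^ (-(b*p)) * |w x| ^ p) →
      (∫ x : EuclideanSpace ℝ (Fin n), ‖x‖ ^ (-(b*p)) * |w x| ^ p) ^ (2/p) ≤
        S * ∫ x : EuclideanSpace ℝ (Fin n), ‖x‖ ^ (-(2*a)) * ‖gradient w x‖^2)
    (m : ℝ)
    (hm : m = sInf {z : ℝ | ∃ x y : ℝ, 0 ≤ x ∧ 0 ≤ y ∧ x + y = 1 ∧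
      z = (x^2 + y^2) / ((x ^ p + y ^ p + p*ν * x ^ α * y ^ β) ^ (2/p))}) :
    ∀ u v : EuclideanSpace ℝ (Fin n) → ℝ, ContDiff ℝ 1 u → ContDiff ℝ 1 v →
      Integrable (fun x : EuclideanSpace ℝ (Fin n) => ‖x‖ ^ (-(2*a)) * ‖gradient u x‖^2) →
      Integrable (fun x : EuclideanSpace ℝ (Fin n) => ‖x‖ ^ (-(2*a)) * ‖gradient v x‖^2) →
      Integrable (fun x : EuclideanSpace ℝ (Fin n) => ‖x‖ ^ (-(b*p)) * |u x| ^ p) →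
      Integrable (fun x : EuclideanSpace ℝ (Fin n) => ‖x‖ ^ (-(b*p)) * |v x| ^ p) →
      (m/S) * ((∫ x : EuclideanSpace ℝ (Fin n),
          ‖x‖ ^ (-(b*p)) * (|u x| ^ p + |v x| ^ p + p*ν * |u x| ^ α * |v x| ^ β)) ^ (2/p)) ≤
        ∫ x : EuclideanSpace ℝ (Fin n), ‖x‖ ^ (-(2*a)) * (‖gradient u x‖^2 + ‖gradient v x‖^2) :=
  stmt_general a b p ν α β hν hα hβ hαβ S hS hCKN m hm
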